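/- arXiv:2504.17008 — 2 statements merged into one kernel-verified Lean document; each statement's English description precedes it below -/
import Mathlib

section
/- Let γ > 0 and let φ : [0,∞) → ℝ be strictly increasing on [0,∞) such that ψ(z) = φ(e^z) is convex on ℝ. If g, f ∈ F_γ satisfy D_{φ,γ}(g,f) = 0, then there exists a constant c > 0 such that g^{1+γ} = c · f^{1+γ} ν-almost everywhere. In particular, the supports of g and f coincide up to a ν-null set. -/
open MeasureTheory
open scoped ENNReal NNReal symmDiff

/-- `⟨g^{1+γ}⟩`, `⟨g f^γ⟩`, `⟨f^{1+γ}⟩`-based functional density power divergence. -/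
noncomputable def FDPD {X : Type*} [MeasurableSpace X] (ν : Measure X)
    (φ : ℝ → ℝ) (γ : ℝ) (g f : X → NNReal) : ℝ :=
  (1 / γ) * φ (∫⁻ x, (g x : ENNReal) ^ (1 + γ) ∂ν).toReal
    - ((1 + γ) / γ) * φ (∫⁻ x, (g x : ENNReal) * (f x : ENNReal) ^ γ ∂ν).toReal
    + φ (∫⁻ x, (f x : ENNReal) ^ (1 + γ) ∂ν).toReal

/-- Membership in the class `F_γ`: measurable, not a.e. zero, with `⟨g^{1+γ}⟩ < ∞`. -/
def MemF {X : Type*} [MeasurableSpace X] (ν : Measure X) (γ : ℝ) (g : X → NNReal) : Prop :=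
  Measurable g ∧ ¬ (g =ᵐ[ν] 0) ∧ (∫⁻ x, (g x : ENNReal) ^ (1 + γ) ∂ν) ≠ ⊤

/-!
Put `p = 1 + γ`, `q = p / γ` (conjugate exponents), `A = ⟨g^p⟩`, `B = ⟨g f^γ⟩`, `C = ⟨f^p⟩`.
The equation `D_{φ,γ}(g, f) = 0` reads `φ B = φ A / p + φ C / q`, and convexity of `φ ∘ exp`
bounds the right-hand side below by `φ (A^{1/p} C^{1/q})`. Since Hölder gives
`B ≤ A^{1/p} C^{1/q}`, strict monotonicity of `φ` forces equality in Hölder's inequality.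
Equality in Hölder means equality a.e. in Young's inequality for the normalised functions
`g / A^{1/p}` and `f^γ / C^{1/q}`, whose equality case gives `g^p / A = f^p / C` a.e.
-/

namespace ENNReal

variable {α : Type*} [MeasurableSpace α] {μ : Measure α} {p q : ℝ}

theorem ae_rpow_eq_of_lintegral_mul_eq_one (hpq : p.HolderConjugate q) {f g : α → ℝ≥0∞}
    (hf : AEMeasurable f μ) (hg : AEMeasurable g μ) (hf_norm : ∫⁻ a, f a ^ p ∂μ = 1)
    (hg_norm : ∫⁻ a, g a ^ q ∂μ = 1) (hfg : ∫⁻ a, f a * g a ∂μ = 1) :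
    (fun a => f a ^ p) =ᵐ[μ] fun a => g a ^ q := by
  set young := fun a => f a ^ p / ENNReal.ofReal p + g a ^ q / ENNReal.ofReal q
  have h_young : ∫⁻ a, young a ∂μ = 1 := by
    simp only [young, div_eq_mul_inv]
    rw [lintegral_add_left' ((hf.pow_const p).mul_const _), lintegral_mul_const'' _
      (hf.pow_const p), lintegral_mul_const'' _ (hg.pow_const q), hf_norm, hg_norm, one_mul,
      one_mul, hpq.inv_add_inv_ennreal]
  have h_eq : (fun a => f a * g a) =ᵐ[μ] young :=
    ae_eq_of_ae_le_of_lintegral_le (.of_forall fun a => young_inequality (f a) (g a) hpq)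
      (by simp [hfg]) (by fun_prop) (by rw [h_young, hfg])
  have hf_fin := ae_lt_top' (hf.pow_const p) (by simp [hf_norm])
  have hg_fin := ae_lt_top' (hg.pow_const q) (by simp [hg_norm])
  filter_upwards [h_eq, hf_fin, hg_fin] with a ha hfa hga
  rw [lt_top_iff_ne_top, Ne, rpow_eq_top_iff_of_pos hpq.pos] at hfa
  rw [lt_top_iff_ne_top, Ne, rpow_eq_top_iff_of_pos hpq.symm.pos] at hga
  simpa [hfa, hga] using (young_inequality_eq_iff (f a) (g a) hpq).1 ha

theorem ae_rpow_eq_mul_rpow_of_lintegral_mul_eq (hpq : p.HolderConjugate q) {f g : α → ℝ≥0∞}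
    (hf : AEMeasurable f μ) (hg : AEMeasurable g μ)
    (hf_nonzero : ∫⁻ a, f a ^ p ∂μ ≠ 0) (hf_top : ∫⁻ a, f a ^ p ∂μ ≠ ⊤)
    (hg_nonzero : ∫⁻ a, g a ^ q ∂μ ≠ 0) (hg_top : ∫⁻ a, g a ^ q ∂μ ≠ ⊤)
    (hfg : ∫⁻ a, f a * g a ∂μ = (∫⁻ a, f a ^ p ∂μ) ^ (1 / p) * (∫⁻ a, g a ^ q ∂μ) ^ (1 / q)) :
    (fun a => f a ^ p) =ᵐ[μ] fun a => ((∫⁻ a, f a ^ p ∂μ) / ∫⁻ a, g a ^ q ∂μ) * g a ^ q := by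
  have h_norm : ∫⁻ a, funMulInvSnorm f p μ a * funMulInvSnorm g q μ a ∂μ = 1 := by
    simp only [funMulInvSnorm, mul_mul_mul_comm (f _)]
    rw [lintegral_mul_const'' _ (by fun_prop), hfg, ← ENNReal.mul_inv, ENNReal.mul_inv_cancel] <;>
      simp [ENNReal.mul_eq_top, hf_nonzero, hf_top, hg_nonzero, hg_top, hpq.pos, hpq.symm.pos]
  filter_upwards [ae_rpow_eq_of_lintegral_mul_eq_one hpq (hf.mul_const _) (hg.mul_const _)
    (lintegral_rpow_funMulInvSnorm_eq_one hpq.pos hf_nonzero hf_top)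
    (lintegral_rpow_funMulInvSnorm_eq_one hpq.symm.pos hg_nonzero hg_top) h_norm] with a
    (ha : funMulInvSnorm f p μ a ^ p = funMulInvSnorm g q μ a ^ q)
  rw [funMulInvSnorm_rpow hpq.pos, funMulInvSnorm_rpow hpq.symm.pos] at ha
  rw [← ENNReal.div_mul_cancel hf_nonzero hf_top (b := f a ^ p), div_eq_mul_inv (f a ^ p), ha,
    div_eq_mul_inv]
  ring

end ENNReal

theorem ConvexOn.apply_rpow_mul_rpow_le {φ : ℝ → ℝ}
    (hψ : ConvexOn ℝ Set.univ fun z => φ (Real.exp z)) {a b s t : ℝ} (ha : 0 < a) (hb : 0 < b)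
    (hs : 0 ≤ s) (ht : 0 ≤ t) (hst : s + t = 1) :
    φ (a ^ s * b ^ t) ≤ s * φ a + t * φ b := by
  have h := hψ.2 (Set.mem_univ (Real.log a)) (Set.mem_univ (Real.log b)) hs ht hst
  simp only [smul_eq_mul, Real.exp_log ha, Real.exp_log hb] at h
  rwa [Real.rpow_def_of_pos ha, Real.rpow_def_of_pos hb, ← Real.exp_add, mul_comm (Real.log a),
    mul_comm (Real.log b)]

theorem StrictMonoOn.eq_rpow_mul_rpow_of_apply_eq {φ : ℝ → ℝ}
    (hφ : StrictMonoOn φ (Set.Ici 0)) (hψ : ConvexOn ℝ Set.univ fun z => φ (Real.exp z))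
    {a b c s t : ℝ} (ha : 0 < a) (hb : 0 ≤ b) (hc : 0 < c) (hs : 0 ≤ s) (ht : 0 ≤ t)
    (hst : s + t = 1) (hle : b ≤ a ^ s * c ^ t) (heq : φ b = s * φ a + t * φ c) :
    b = a ^ s * c ^ t :=
  hle.antisymm <| (hφ.le_iff_le (Set.mem_Ici.2 (by positivity)) hb).1 <|
    heq ▸ hψ.apply_rpow_mul_rpow_le ha hc hs ht hst

theorem Real.holderConjugate_one_add_div {γ : ℝ} (hγ : 0 < γ) :
    (1 + γ).HolderConjugate ((1 + γ) / γ) :=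
  (holderConjugate_iff_eq_conjExponent (by linarith)).2 (by rw [add_sub_cancel_left])

section FDPD

variable {X : Type*} [MeasurableSpace X] {ν : Measure X} {φ : ℝ → ℝ} {γ : ℝ} {g f : X → ℝ≥0}

theorem fdpd_eq_zero_iff (hγ : 0 < γ) :
    FDPD ν φ γ g f = 0 ↔
      φ (∫⁻ x, (g x : ℝ≥0∞) * (f x : ℝ≥0∞) ^ γ ∂ν).toReal =
        1 / (1 + γ) * φ (∫⁻ x, (g x : ℝ≥0∞) ^ (1 + γ) ∂ν).toReal +
          1 / ((1 + γ) / γ) * φ (∫⁻ x, (f x : ℝ≥0∞) ^ (1 + γ) ∂ν).toReal := by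
  have : 1 + γ ≠ 0 := by linarith
  rw [FDPD]
  constructor <;> intro h <;> field_simp at h ⊢ <;> linarith

theorem MemF.lintegral_rpow_ne_zero (hg : MemF ν γ g) : ∫⁻ x, (g x : ℝ≥0∞) ^ (1 + γ) ∂ν ≠ 0 := by
  intro h
  rw [lintegral_eq_zero_iff (hg.1.coe_nnreal_ennreal.pow_const _)] at h
  refine hg.2.1 ?_
  filter_upwards [h] with x hx
  simp only [Pi.zero_apply, ENNReal.rpow_eq_zero_iff, ENNReal.coe_eq_zero, ENNReal.coe_ne_top,
    false_and, or_false] at hx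
  exact hx.1

theorem measure_support_symmDiff_eq_zero_of_ae_rpow_eq {p : ℝ} (hp : 0 < p) {c : ℝ≥0∞}
    (hc : c ≠ 0) (h : (fun x => (g x : ℝ≥0∞) ^ p) =ᵐ[ν] fun x => c * (f x : ℝ≥0∞) ^ p) :
    ν (Function.support g ∆ Function.support f) = 0 := by
  rw [measure_symmDiff_eq_zero_iff, Filter.eventuallyEq_set]
  filter_upwards [h] with x hx
  rw [Function.mem_support, Function.mem_support, not_iff_not, ← ENNReal.coe_eq_zero,
    ← ENNReal.rpow_eq_zero_iff_of_pos hp, hx, mul_eq_zero, ENNReal.rpow_eq_zero_iff_of_pos hp]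
  simp [hc]

theorem lintegral_mul_rpow_eq_of_fdpd_eq_zero (hγ : 0 < γ) (hφ : StrictMonoOn φ (Set.Ici 0))
    (hψ : ConvexOn ℝ Set.univ fun z => φ (Real.exp z)) (hg : MemF ν γ g) (hf : MemF ν γ f)
    (hzero : FDPD ν φ γ g f = 0) :
    ∫⁻ x, (g x : ℝ≥0∞) * (f x : ℝ≥0∞) ^ γ ∂ν =
      (∫⁻ x, (g x : ℝ≥0∞) ^ (1 + γ) ∂ν) ^ (1 / (1 + γ)) *
        (∫⁻ x, (f x : ℝ≥0∞) ^ (1 + γ) ∂ν) ^ (1 / ((1 + γ) / γ)) := by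
  have hpq := Real.holderConjugate_one_add_div hγ
  have hHolder := ENNReal.lintegral_mul_le_Lp_mul_Lq ν hpq hg.1.coe_nnreal_ennreal.aemeasurable
    (hf.1.coe_nnreal_ennreal.pow_const γ).aemeasurable
  simp only [Pi.mul_apply, ← ENNReal.rpow_mul, mul_div_cancel₀ _ hγ.ne'] at hHolder
  have hfin : (∫⁻ x, (g x : ℝ≥0∞) ^ (1 + γ) ∂ν) ^ (1 / (1 + γ)) *
      (∫⁻ x, (f x : ℝ≥0∞) ^ (1 + γ) ∂ν) ^ (1 / ((1 + γ) / γ)) ≠ ⊤ :=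
    ENNReal.mul_ne_top (ENNReal.rpow_ne_top_of_nonneg hpq.one_div_nonneg hg.2.2)
      (ENNReal.rpow_ne_top_of_nonneg hpq.symm.one_div_nonneg hf.2.2)
  rw [← ENNReal.toReal_eq_toReal_iff' (ne_top_of_le_ne_top hfin hHolder) hfin]
  have hHolder_real := ENNReal.toReal_mono hfin hHolder
  simp only [ENNReal.toReal_mul, ← ENNReal.toReal_rpow] at hHolder_real ⊢
  exact hφ.eq_rpow_mul_rpow_of_apply_eq hψ
    (ENNReal.toReal_pos hg.lintegral_rpow_ne_zero hg.2.2) ENNReal.toReal_nonneg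
    (ENNReal.toReal_pos hf.lintegral_rpow_ne_zero hf.2.2) hpq.one_div_nonneg
    hpq.symm.one_div_nonneg (by simpa [one_div] using hpq.inv_add_inv_eq_one) hHolder_real
    ((fdpd_eq_zero_iff hγ).1 hzero)

end FDPD

theorem fdpd_eq_zero_imp_proportional {X : Type*} [MeasurableSpace X] (ν : Measure X)
    (γ : ℝ) (hγ : 0 < γ)
    (φ : ℝ → ℝ) (hφ : StrictMonoOn φ (Set.Ici (0 : ℝ)))
    (hψ : ConvexOn ℝ Set.univ (fun z : ℝ => φ (Real.exp z)))
    (g f : X → NNReal) (hg : MemF ν γ g) (hf : MemF ν γ f)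
    (hzero : FDPD ν φ γ g f = 0) :
    (∃ c : NNReal, 0 < c ∧
      (fun x => (g x : ENNReal) ^ (1 + γ)) =ᵐ[ν]
        (fun x => (c : ENNReal) * (f x : ENNReal) ^ (1 + γ))) ∧
    ν (Function.support g ∆ Function.support f) = 0 := by
  have hpq := Real.holderConjugate_one_add_div hγ
  have hrpow (x : X) : ((f x : ℝ≥0∞) ^ γ) ^ ((1 + γ) / γ) = (f x : ℝ≥0∞) ^ (1 + γ) := by
    rw [← ENNReal.rpow_mul, mul_div_cancel₀ _ hγ.ne']
  have hprop := ENNReal.ae_rpow_eq_mul_rpow_of_lintegral_mul_eq hpq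
    hg.1.coe_nnreal_ennreal.aemeasurable (hf.1.coe_nnreal_ennreal.pow_const γ).aemeasurable
    hg.lintegral_rpow_ne_zero hg.2.2 (by simpa only [hrpow] using hf.lintegral_rpow_ne_zero)
    (by simpa only [hrpow] using hf.2.2)
    (by simpa only [hrpow] using lintegral_mul_rpow_eq_of_fdpd_eq_zero hγ hφ hψ hg hf hzero)
  simp only [hrpow] at hprop
  have hc0 := ENNReal.div_pos hg.lintegral_rpow_ne_zero hf.2.2
  have hctop := ENNReal.div_ne_top hg.2.2 hf.lintegral_rpow_ne_zero
  refine ⟨⟨_, ENNReal.toNNReal_pos hc0.ne' hctop, by rwa [ENNReal.coe_toNNReal hctop]⟩,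
    measure_support_symmDiff_eq_zero_of_ae_rpow_eq (by linarith) hc0.ne' hprop⟩
end

section
/- Let γ > 0 and let ξ : (0,∞) → (0,∞) be such that ψ(z) = log ξ(e^z) is strictly increasing and convex on ℝ. Then for all g, f ∈ F_γ with ⟨g f^γ⟩ > 0: ξ(⟨g f^γ⟩)^{1+γ} ≤ ξ(⟨g^{1+γ}⟩) · ξ(⟨f^{1+γ}⟩)^γ. -/
/-
Hölder's inequality with exponents `1 + γ` and `(1 + γ)/γ` gives
`⟨g f^γ⟩ ≤ ⟨g^{1+γ}⟩^{1/(1+γ)} ⟨f^{1+γ}⟩^{γ/(1+γ)}`. Taking logarithms, this says that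
`log ⟨g f^γ⟩` lies below the convex combination of `log ⟨g^{1+γ}⟩` and `log ⟨f^{1+γ}⟩` with
weights `1/(1+γ)` and `γ/(1+γ)`; since `ψ = log ∘ ξ ∘ exp` is monotone and convex, applying `ψ`
preserves this bound, and exponentiating and raising to the power `1 + γ` gives the claim.
-/

open MeasureTheory

open ENNReal Set

theorem le_rpow_mul_rpow_of_convexOn_log_comp_exp {ξ : ℝ → ℝ}
    (hψm : Monotone fun z ↦ Real.log (ξ (Real.exp z)))
    (hψc : ConvexOn ℝ univ fun z ↦ Real.log (ξ (Real.exp z)))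
    (hξpos : ∀ z, 0 < z → 0 < ξ z) {x y z a b : ℝ} (hx : 0 < x) (hy : 0 < y) (hz : 0 < z)
    (ha : 0 ≤ a) (hb : 0 ≤ b) (hab : a + b = 1) (h : z ≤ x ^ a * y ^ b) :
    ξ z ≤ ξ x ^ a * ξ y ^ b := by
  have hψ : ∀ {t : ℝ}, 0 < t → Real.log (ξ (Real.exp (Real.log t))) = Real.log (ξ t) :=
    fun ht ↦ by rw [Real.exp_log ht]
  have hlog : Real.log z ≤ a * Real.log x + b * Real.log y := by
    calc Real.log z ≤ Real.log (x ^ a * y ^ b) := Real.log_le_log hz h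
      _ = a * Real.log x + b * Real.log y := by
        rw [Real.log_mul (by positivity) (by positivity), Real.log_rpow hx, Real.log_rpow hy]
  have hlogξ : Real.log (ξ z) ≤ a * Real.log (ξ x) + b * Real.log (ξ y) := by
    calc Real.log (ξ z) ≤ Real.log (ξ (Real.exp (a * Real.log x + b * Real.log y))) :=
          hψ hz ▸ hψm hlog
      _ ≤ a * Real.log (ξ x) + b * Real.log (ξ y) := by
          simpa only [smul_eq_mul, hψ hx, hψ hy] using
            hψc.2 (mem_univ (Real.log x)) (mem_univ (Real.log y)) ha hb hab
  have hξx := hξpos x hx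
  have hξy := hξpos y hy
  rwa [← Real.log_le_log_iff (hξpos z hz) (by positivity), Real.log_mul (by positivity)
    (by positivity), Real.log_rpow hξx, Real.log_rpow hξy]

theorem lintegral_mul_rpow_le {X : Type*} [MeasurableSpace X] {ν : Measure X} {γ : ℝ} (hγ : 0 < γ) {g f : X → ℝ≥0∞}
    (hg : AEMeasurable g ν) (hf : AEMeasurable f ν) :
    ∫⁻ x, g x * f x ^ γ ∂ν ≤
      (∫⁻ x, g x ^ (1 + γ) ∂ν) ^ (1 + γ)⁻¹ * (∫⁻ x, f x ^ (1 + γ) ∂ν) ^ (γ / (1 + γ)) := by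
  have hpq : (1 + γ).HolderConjugate ((1 + γ) / γ) :=
    (Real.holderConjugate_iff_eq_conjExponent (by linarith)).2 (by rw [add_sub_cancel_left])
  have hfγ : ∀ x, (f x ^ γ) ^ ((1 + γ) / γ) = f x ^ (1 + γ) := fun x ↦ by
    rw [← ENNReal.rpow_mul, mul_div_cancel₀ _ hγ.ne']
  simpa only [Pi.mul_apply, hfγ, one_div, inv_div] using
    ENNReal.lintegral_mul_le_Lp_mul_Lq ν hpq hg (hf.pow_const γ)

theorem xi_holder_inequality {X : Type*} [MeasurableSpace X] (ν : Measure X)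
    (γ : ℝ) (hγ : 0 < γ) (ξ : ℝ → ℝ) (hξpos : ∀ z : ℝ, 0 < z → 0 < ξ z)
    (hψm : StrictMono (fun z : ℝ => Real.log (ξ (Real.exp z))))
    (hψc : ConvexOn ℝ Set.univ (fun z : ℝ => Real.log (ξ (Real.exp z))))
    (g f : X → NNReal) (hg : MemF ν γ g) (hf : MemF ν γ f)
    (hgf : (∫⁻ x, (g x : ENNReal) * (f x : ENNReal) ^ γ ∂ν) ≠ 0) :
    ξ ((∫⁻ x, (g x : ENNReal) * (f x : ENNReal) ^ γ ∂ν).toReal) ^ (1 + γ)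
      ≤ ξ ((∫⁻ x, (g x : ENNReal) ^ (1 + γ) ∂ν).toReal) *
        ξ ((∫⁻ x, (f x : ENNReal) ^ (1 + γ) ∂ν).toReal) ^ γ := by
  obtain ⟨hgm, -, hgtop⟩ := hg
  obtain ⟨hfm, -, hftop⟩ := hf
  set I := ∫⁻ x, (g x : ENNReal) * (f x : ENNReal) ^ γ ∂ν
  set A := ∫⁻ x, (g x : ENNReal) ^ (1 + γ) ∂ν
  set B := ∫⁻ x, (f x : ENNReal) ^ (1 + γ) ∂ν
  have holder : I ≤ A ^ (1 + γ)⁻¹ * B ^ (γ / (1 + γ)) :=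
    lintegral_mul_rpow_le hγ hgm.coe_nnreal_ennreal.aemeasurable
      hfm.coe_nnreal_ennreal.aemeasurable
  have hfin : A ^ (1 + γ)⁻¹ * B ^ (γ / (1 + γ)) ≠ ∞ :=
    mul_ne_top (rpow_ne_top_of_nonneg (by positivity) hgtop)
      (rpow_ne_top_of_nonneg (by positivity) hftop)
  have hI : 0 < I.toReal := toReal_pos hgf (ne_top_of_le_ne_top hfin holder)
  have holderR : I.toReal ≤ A.toReal ^ (1 + γ)⁻¹ * B.toReal ^ (γ / (1 + γ)) := by
    simpa only [toReal_mul, toReal_rpow] using toReal_mono hfin holder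
  have hA : 0 < A.toReal := toReal_nonneg.lt_of_ne fun hA ↦ by
    rw [← hA, Real.zero_rpow (by positivity), zero_mul] at holderR
    linarith
  have hB : 0 < B.toReal := toReal_nonneg.lt_of_ne fun hB ↦ by
    rw [← hB, Real.zero_rpow (by positivity), mul_zero] at holderR
    linarith
  calc ξ I.toReal ^ (1 + γ)
      ≤ (ξ A.toReal ^ (1 + γ)⁻¹ * ξ B.toReal ^ (γ / (1 + γ))) ^ (1 + γ) := by
        gcongr
        · exact (hξpos _ hI).le
        · exact le_rpow_mul_rpow_of_convexOn_log_comp_exp hψm.monotone hψc hξpos hA hB hI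
            (by positivity) (by positivity) (by field_simp) holderR
    _ = ξ A.toReal * ξ B.toReal ^ γ := by
        have hξA := hξpos _ hA
        have hξB := hξpos _ hB
        rw [Real.mul_rpow (by positivity) (by positivity), ← Real.rpow_mul (by positivity),
          ← Real.rpow_mul (by positivity), inv_mul_cancel₀ (by positivity),
          div_mul_cancel₀ _ (by positivity), Real.rpow_one]
end
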